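/- For t = 0, the element ω := (i/2)(φ1∧φ̄1 + φ2∧φ̄2 + φ3∧φ̄3) ∈ Λ^{1,1} satisfies ∂_0∂̄_0(ω) = 0 and ∂_0∂̄_0(ω∧ω) = 0. (That is, the standard invariant Hermitian metric on the Calabi–Eckmann manifold S³×S³ is both SKT and Gauduchon.) -/

import Mathlib

open Complex

noncomputable section

/-- The 64-dimensional exterior algebra on six generators, modelled as
functions from subsets of `Fin 6` to `ℂ`. The generators `φ 0, φ 1, φ 2`
represent `φ1, φ2, φ3` (bidegree `(1,0)`) and `φ 3, φ 4, φ 5` represent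
`φ̄1, φ̄2, φ̄3` (bidegree `(0,1)`). -/
abbrev Lam : Type := Finset (Fin 6) → ℂ

/-- Basis monomial indexed by a subset of the generators. -/
def mon (S : Finset (Fin 6)) : Lam := Pi.single S 1

/-- The generators. -/
def φ (j : Fin 6) : Lam := mon {j}

/-- The Koszul sign. -/
def wsign (T U : Finset (Fin 6)) : ℂ :=
  (-1 : ℂ) ^ (((T ×ˢ U).filter fun p => p.2 < p.1).card)

/-- The wedge product. -/
def wedge (x y : Lam) : Lam :=
  fun S => ∑ T ∈ S.powerset, wsign T (S \ T) * x T * y (S \ T)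

infixr:70 " ⋏ " => wedge

/-- The bidegree-`(p,q)` component `Λ^{p,q}`. -/
def Lpq (p q : ℕ) : Submodule ℂ Lam where
  carrier := {x | ∀ S : Finset (Fin 6),
    ¬((S.filter fun i : Fin 6 => (i : ℕ) < 3).card = p ∧ (S.filter fun i : Fin 6 => 3 ≤ (i : ℕ)).card = q) →
      x S = 0}
  add_mem' := by intro a b ha hb S hS; simp [ha S hS, hb S hS]
  zero_mem' := by intro S _; rfl
  smul_mem' := by intro c x hx S hS; simp [hx S hS]

/-- The total-degree-`k` component. -/
def Ldeg (k : ℕ) : Submodule ℂ Lam where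
  carrier := {x | ∀ S : Finset (Fin 6), S.card ≠ k → x S = 0}
  add_mem' := by intro a b ha hb S hS; simp [ha S hS, hb S hS]
  zero_mem' := by intro S _; rfl
  smul_mem' := by intro c x hx S hS; simp [hx S hS]

/-- `D` is a graded derivation of bidegree `(a,b)`: it maps `Λ^{p,q}` to `Λ^{p+a,q+b}` and
satisfies the graded Leibniz rule with the sign of the total degree. -/
def IsDer (D : Lam →ₗ[ℂ] Lam) (a b : ℕ) : Prop :=
  (∀ p q : ℕ, ∀ x ∈ Lpq p q, D x ∈ Lpq (p + a) (q + b)) ∧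
  (∀ k : ℕ, ∀ x ∈ Ldeg k, ∀ y : Lam,
    D (x ⋏ y) = (D x) ⋏ y + ((-1 : ℂ)) ^ k • (x ⋏ D y))

/-- `D` is the operator `∂_t` : the graded derivation of bidegree `(1,0)` determined on the
generators by the structure equations of the deformed Calabi–Eckmann structure `J_t`
(the values on the conjugate generators `φ 3, φ 4, φ 5` being obtained
by applying the conjugation `σ` to the values of `∂̄_t`). -/
def IsDelT (t : ℂ) (D : Lam →ₗ[ℂ] Lam) : Prop :=
  IsDer D 1 0 ∧
  D (φ 0) = (Complex.I * ((starRingEnd ℂ) t + 1) / (1 - Complex.normSq t)) • (φ 0 ⋏ φ 2) ∧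
  D (φ 1) = ((1 - (starRingEnd ℂ) t) / (1 - Complex.normSq t)) • (φ 1 ⋏ φ 2) ∧
  D (φ 2) = 0 ∧
  D (φ 3) = (-(Complex.I * ((starRingEnd ℂ) t + 1)) / (1 - Complex.normSq t)) • (φ 3 ⋏ φ 2) ∧
  D (φ 4) = (((starRingEnd ℂ) t - 1) / (1 - Complex.normSq t)) • (φ 4 ⋏ φ 2) ∧
  D (φ 5) = ((starRingEnd ℂ) t + Complex.I) • (φ 3 ⋏ φ 0) + ((starRingEnd ℂ) t + 1) • (φ 4 ⋏ φ 1)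

/-- `Db` is the operator `∂̄_t`. -/
def IsDelBarT (t : ℂ) (Db : Lam →ₗ[ℂ] Lam) : Prop :=
  IsDer Db 0 1 ∧
  Db (φ 0) = (Complex.I * (t + 1) / (1 - Complex.normSq t)) • (φ 0 ⋏ φ 5) ∧
  Db (φ 1) = ((t - 1) / (1 - Complex.normSq t)) • (φ 1 ⋏ φ 5) ∧
  Db (φ 2) = (t - Complex.I) • (φ 0 ⋏ φ 3) + (t + 1) • (φ 1 ⋏ φ 4) ∧
  Db (φ 3) = (-(Complex.I * (t + 1)) / (1 - Complex.normSq t)) • (φ 3 ⋏ φ 5) ∧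
  Db (φ 4) = ((1 - t) / (1 - Complex.normSq t)) • (φ 4 ⋏ φ 5) ∧
  Db (φ 5) = 0

/-- The Bott–Chern cocycles in bidegree `(p,q)` : `Ker ∂ ∩ Ker ∂̄ ∩ Λ^{p,q}`. -/
def Kbc (D Db : Lam →ₗ[ℂ] Lam) (p q : ℕ) : Submodule ℂ Lam :=
  LinearMap.ker D ⊓ LinearMap.ker Db ⊓ Lpq p q

/-- The Bott–Chern coboundaries in bidegree `(p,q)` : `∂∂̄(Λ^{p-1,q-1})`
(zero when `p = 0` or `q = 0`). -/
def Ibc (D Db : Lam →ₗ[ℂ] Lam) (p q : ℕ) : Submodule ℂ Lam :=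
  if p = 0 ∨ q = 0 then ⊥ else Submodule.map (D ∘ₗ Db) (Lpq (p - 1) (q - 1))

/-- The Aeppli cocycles in bidegree `(p,q)` : `Ker (∂∂̄) ∩ Λ^{p,q}`. -/
def Ka (D Db : Lam →ₗ[ℂ] Lam) (p q : ℕ) : Submodule ℂ Lam :=
  LinearMap.ker (D ∘ₗ Db) ⊓ Lpq p q

/-- The Aeppli coboundaries in bidegree `(p,q)` : `∂(Λ^{p-1,q}) + ∂̄(Λ^{p,q-1})`. -/
def Ia (D Db : Lam →ₗ[ℂ] Lam) (p q : ℕ) : Submodule ℂ Lam :=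
  (if p = 0 then ⊥ else Submodule.map D (Lpq (p - 1) q)) ⊔
  (if q = 0 then ⊥ else Submodule.map Db (Lpq p (q - 1)))

end

noncomputable section

/-- The fundamental form `ω = (i/2)(φ1∧φ̄1 + φ2∧φ̄2 + φ3∧φ̄3)` of the standard invariant
Hermitian metric. -/
def ω : Lam := (Complex.I / 2) • (φ 0 ⋏ φ 3 + φ 1 ⋏ φ 4 + φ 2 ⋏ φ 5)

/-!
By the graded Leibniz rule, `∂∂̄(ω∧ω) = ∂∂̄ω∧ω + ω∧∂∂̄ω + (∂ω∧∂̄ω - ∂̄ω∧∂ω)` for the even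
form `ω`. For every `t`, both `∂_t` and `∂̄_t` kill `φ^{1 1̄}` and `φ^{2 2̄}`, so `∂ω` and `∂̄ω`
come from `φ^{3 3̄}` alone and are combinations of two monomials each. A direct computation then
shows that `∂∂̄ω` and `∂ω∧∂̄ω - ∂̄ω∧∂ω` are multiples of the same scalar `sktDefect t`, which
vanishes at `t = 0`.
-/

open ComplexConjugate

lemma add_wedge (x y z : Lam) : (x + y) ⋏ z = x ⋏ z + y ⋏ z := by
  funext S
  simp [wedge, add_mul, mul_add, Finset.sum_add_distrib]

lemma wedge_add (x y z : Lam) : x ⋏ (y + z) = x ⋏ y + x ⋏ z := by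
  funext S
  simp [wedge, mul_add, Finset.sum_add_distrib]

lemma smul_wedge (c : ℂ) (x y : Lam) : (c • x) ⋏ y = c • (x ⋏ y) := by
  funext S
  simp only [wedge, Pi.smul_apply, smul_eq_mul, Finset.mul_sum]
  exact Finset.sum_congr rfl fun T _ => by ring

lemma wedge_smul (c : ℂ) (x y : Lam) : x ⋏ (c • y) = c • (x ⋏ y) := by
  funext S
  simp only [wedge, Pi.smul_apply, smul_eq_mul, Finset.mul_sum]
  exact Finset.sum_congr rfl fun T _ => by ring

lemma zero_wedge (y : Lam) : (0 : Lam) ⋏ y = 0 := by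
  funext S; simp [wedge]

lemma wedge_zero (x : Lam) : x ⋏ (0 : Lam) = 0 := by
  funext S; simp [wedge]

lemma neg_wedge (x y : Lam) : (-x) ⋏ y = -(x ⋏ y) := by
  funext S; simp [wedge, Finset.sum_neg_distrib]

lemma wedge_neg (x y : Lam) : x ⋏ (-y) = -(x ⋏ y) := by
  funext S; simp [wedge, Finset.sum_neg_distrib]

lemma mon_mem_Ldeg {T : Finset (Fin 6)} {k : ℕ} (h : T.card = k) : mon T ∈ Ldeg k := by
  intro S hS
  simp only [mon, Pi.single_apply]
  rw [if_neg]
  rintro rfl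
  exact hS h

lemma mon_wedge_mon_of_disjoint {T U : Finset (Fin 6)} (h : Disjoint T U) :
    mon T ⋏ mon U = wsign T U • mon (T ∪ U) := by
  funext S
  simp only [wedge, mon, Pi.single_apply, Pi.smul_apply, smul_eq_mul]
  by_cases hTS : T ⊆ S
  · rw [Finset.sum_eq_single_of_mem T (Finset.mem_powerset.mpr hTS)]
    · rw [if_pos rfl, mul_one]
      by_cases hS : S = T ∪ U
      · subst hS
        rw [Finset.union_sdiff_cancel_left h, if_pos rfl, if_pos rfl]
      · have hSU : S \ T ≠ U := fun hU => hS (by rw [← hU, Finset.union_sdiff_of_subset hTS])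
        rw [if_neg hSU, if_neg hS, mul_zero, mul_zero]
    · intro T' _ hT'
      rw [if_neg hT', mul_zero, zero_mul]
  · rw [Finset.sum_eq_zero, if_neg, mul_zero]
    · intro hS; exact hTS (hS ▸ Finset.subset_union_left)
    · intro T' hT'
      rcases eq_or_ne T' T with rfl | hT'T
      · exact absurd (Finset.mem_powerset.mp hT') hTS
      · rw [if_neg hT'T, mul_zero, zero_mul]

lemma mon_wedge_mon_of_not_disjoint {T U : Finset (Fin 6)} (h : ¬ Disjoint T U) :
    mon T ⋏ mon U = 0 := by
  funext S
  simp only [wedge, mon, Pi.single_apply]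
  refine Finset.sum_eq_zero fun T' _ => ?_
  rcases eq_or_ne T' T with rfl | hT'T
  · rw [if_pos rfl, mul_one, if_neg, mul_zero]
    rintro rfl
    exact h Finset.disjoint_sdiff
  · rw [if_neg hT'T, mul_zero, zero_mul]

lemma mon_wedge_mon_of_even {T U V : Finset (Fin 6)}
    (h : Disjoint T U ∧ T ∪ U = V ∧ Even ((T ×ˢ U).filter fun p => p.2 < p.1).card) :
    mon T ⋏ mon U = mon V := by
  obtain ⟨hd, rfl, he⟩ := h
  rw [mon_wedge_mon_of_disjoint hd, wsign, he.neg_one_pow, one_smul]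

lemma mon_wedge_mon_of_odd {T U V : Finset (Fin 6)}
    (h : Disjoint T U ∧ T ∪ U = V ∧ Odd ((T ×ˢ U).filter fun p => p.2 < p.1).card) :
    mon T ⋏ mon U = -mon V := by
  obtain ⟨hd, rfl, ho⟩ := h
  rw [mon_wedge_mon_of_disjoint hd, wsign, ho.neg_one_pow, neg_one_smul]

lemma φ_wedge_φ_of_lt {i j : Fin 6} (h : i < j) : φ i ⋏ φ j = mon {i, j} :=
  mon_wedge_mon_of_even ⟨by simpa using h.ne, (Finset.insert_eq i {j}).symm,
    by simp [Finset.filter_singleton, h.not_gt]⟩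

lemma φ_wedge_φ_of_gt {i j : Fin 6} (h : j < i) : φ i ⋏ φ j = -mon {j, i} :=
  mon_wedge_mon_of_odd ⟨by simpa using h.ne', by rw [Finset.pair_comm, Finset.insert_eq],
    by simp [Finset.filter_singleton, h]⟩

lemma φ_mem_Ldeg (j : Fin 6) : φ j ∈ Ldeg 1 :=
  mon_mem_Ldeg (Finset.card_singleton j)

section Leibniz

variable {D : Lam →ₗ[ℂ] Lam} {a b k : ℕ}

lemma IsDer.map_wedge_of_odd (hD : IsDer D a b) (hk : Odd k) {x : Lam} (hx : x ∈ Ldeg k)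
    (y : Lam) : D (x ⋏ y) = D x ⋏ y - x ⋏ D y := by
  rw [hD.2 k x hx y, hk.neg_one_pow, neg_one_smul, sub_eq_add_neg]

lemma IsDer.map_wedge_of_even (hD : IsDer D a b) (hk : Even k) {x : Lam} (hx : x ∈ Ldeg k)
    (y : Lam) : D (x ⋏ y) = D x ⋏ y + x ⋏ D y := by
  rw [hD.2 k x hx y, hk.neg_one_pow, one_smul]

lemma IsDer.map_map_wedge_self {Db : Lam →ₗ[ℂ] Lam} {a' b' : ℕ} (hD : IsDer D a b)
    (hDb : IsDer Db a' b') (hk : Even k) {x : Lam} (hx : x ∈ Ldeg k)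
    (hDbx : Db x ∈ Ldeg (k + 1)) :
    D (Db (x ⋏ x)) = D (Db x) ⋏ x + x ⋏ D (Db x) + (D x ⋏ Db x - Db x ⋏ D x) := by
  rw [hDb.map_wedge_of_even hk hx, map_add, hD.map_wedge_of_odd hk.add_one hDbx,
    hD.map_wedge_of_even hk hx]
  abel

end Leibniz

section CalabiEckmann

variable {t : ℂ} {D Db : Lam →ₗ[ℂ] Lam}

lemma IsDelT.apply_diag (hD : IsDelT t D) :
    D (mon {0, 3}) = 0 ∧ D (mon {1, 4}) = 0 ∧
      D (mon {2, 5}) = -((conj t + I) • mon {0, 2, 3} + (conj t + 1) • mon {1, 2, 4}) := by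
  obtain ⟨hDer, h0, h1, h2, h3, h4, h5⟩ := hD
  simp (disch := decide) only [φ_wedge_φ_of_lt, φ_wedge_φ_of_gt] at h0 h1 h3 h4 h5
  have e02_3 : mon {0, 2} ⋏ φ 3 = mon {0, 2, 3} := mon_wedge_mon_of_even (by decide)
  have e0_23 : φ 0 ⋏ mon {2, 3} = mon {0, 2, 3} := mon_wedge_mon_of_even (by decide)
  have e12_4 : mon {1, 2} ⋏ φ 4 = mon {1, 2, 4} := mon_wedge_mon_of_even (by decide)
  have e1_24 : φ 1 ⋏ mon {2, 4} = mon {1, 2, 4} := mon_wedge_mon_of_even (by decide)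
  have e2_03 : φ 2 ⋏ mon {0, 3} = -mon {0, 2, 3} := mon_wedge_mon_of_odd (by decide)
  have e2_14 : φ 2 ⋏ mon {1, 4} = -mon {1, 2, 4} := mon_wedge_mon_of_odd (by decide)
  refine ⟨?_, ?_, ?_⟩
  · rw [← φ_wedge_φ_of_lt (by decide : (0 : Fin 6) < 3),
      hDer.map_wedge_of_odd odd_one (φ_mem_Ldeg 0), h0, h3]
    simp only [smul_wedge, wedge_smul, wedge_neg, e02_3, e0_23]
    module
  · rw [← φ_wedge_φ_of_lt (by decide : (1 : Fin 6) < 4),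
      hDer.map_wedge_of_odd odd_one (φ_mem_Ldeg 1), h1, h4]
    simp only [smul_wedge, wedge_smul, wedge_neg, e12_4, e1_24]
    module
  · rw [← φ_wedge_φ_of_lt (by decide : (2 : Fin 6) < 5),
      hDer.map_wedge_of_odd odd_one (φ_mem_Ldeg 2), h2, h5]
    simp only [zero_wedge, wedge_add, wedge_smul, wedge_neg, e2_03, e2_14]
    module

lemma IsDelBarT.apply_diag (hDb : IsDelBarT t Db) :
    Db (mon {0, 3}) = 0 ∧ Db (mon {1, 4}) = 0 ∧
      Db (mon {2, 5}) = (t - I) • mon {0, 3, 5} + (t + 1) • mon {1, 4, 5} := by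
  obtain ⟨hDer, h0, h1, h2, h3, h4, h5⟩ := hDb
  simp (disch := decide) only [φ_wedge_φ_of_lt] at h0 h1 h2 h3 h4
  have e05_3 : mon {0, 5} ⋏ φ 3 = -mon {0, 3, 5} := mon_wedge_mon_of_odd (by decide)
  have e0_35 : φ 0 ⋏ mon {3, 5} = mon {0, 3, 5} := mon_wedge_mon_of_even (by decide)
  have e15_4 : mon {1, 5} ⋏ φ 4 = -mon {1, 4, 5} := mon_wedge_mon_of_odd (by decide)
  have e1_45 : φ 1 ⋏ mon {4, 5} = mon {1, 4, 5} := mon_wedge_mon_of_even (by decide)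
  have e03_5 : mon {0, 3} ⋏ φ 5 = mon {0, 3, 5} := mon_wedge_mon_of_even (by decide)
  have e14_5 : mon {1, 4} ⋏ φ 5 = mon {1, 4, 5} := mon_wedge_mon_of_even (by decide)
  refine ⟨?_, ?_, ?_⟩
  · rw [← φ_wedge_φ_of_lt (by decide : (0 : Fin 6) < 3),
      hDer.map_wedge_of_odd odd_one (φ_mem_Ldeg 0), h0, h3]
    simp only [smul_wedge, wedge_smul, e05_3, e0_35]
    module
  · rw [← φ_wedge_φ_of_lt (by decide : (1 : Fin 6) < 4),
      hDer.map_wedge_of_odd odd_one (φ_mem_Ldeg 1), h1, h4]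
    simp only [smul_wedge, wedge_smul, e15_4, e1_45]
    module
  · rw [← φ_wedge_φ_of_lt (by decide : (2 : Fin 6) < 5),
      hDer.map_wedge_of_odd odd_one (φ_mem_Ldeg 2), h2, h5]
    simp only [add_wedge, smul_wedge, wedge_zero, e03_5, e14_5, sub_zero]

lemma ω_eq_mon : ω = (I / 2) • (mon {0, 3} + mon {1, 4} + mon {2, 5}) := by
  simp (disch := decide) only [ω, φ_wedge_φ_of_lt]

lemma ω_mem_Ldeg : ω ∈ Ldeg 2 := by
  rw [ω_eq_mon]
  exact Submodule.smul_mem _ _ <| add_mem (add_mem (mon_mem_Ldeg rfl) (mon_mem_Ldeg rfl))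
    (mon_mem_Ldeg rfl)

lemma IsDelT.apply_ω (hD : IsDelT t D) :
    D ω = -(I / 2) • ((conj t + I) • mon {0, 2, 3} + (conj t + 1) • mon {1, 2, 4}) := by
  obtain ⟨h03, h14, h25⟩ := hD.apply_diag
  rw [ω_eq_mon, map_smul, map_add, map_add, h03, h14, h25]
  module

lemma IsDelBarT.apply_ω (hDb : IsDelBarT t Db) :
    Db ω = (I / 2) • ((t - I) • mon {0, 3, 5} + (t + 1) • mon {1, 4, 5}) := by
  obtain ⟨h03, h14, h25⟩ := hDb.apply_diag
  rw [ω_eq_mon, map_smul, map_add, map_add, h03, h14, h25, zero_add, zero_add]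

lemma IsDelBarT.apply_ω_mem_Ldeg (hDb : IsDelBarT t Db) : Db ω ∈ Ldeg 3 := by
  rw [hDb.apply_ω]
  exact Submodule.smul_mem _ _ <| add_mem (Submodule.smul_mem _ _ (mon_mem_Ldeg rfl))
    (Submodule.smul_mem _ _ (mon_mem_Ldeg rfl))

/-- Equal to `2 (|t|² + Re t - Im t)`. -/
def sktDefect (t : ℂ) : ℂ := (t - I) * (conj t + 1) + (t + 1) * (conj t + I)

lemma sktDefect_zero : sktDefect 0 = 0 := by
  simp [sktDefect]

lemma IsDelT.apply_delBar_ω (hD : IsDelT t D) (hDb : IsDelBarT t Db) :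
    D (Db ω) = (I / 2 * sktDefect t) • mon {0, 1, 3, 4} := by
  obtain ⟨h03, h14, -⟩ := hD.apply_diag
  obtain ⟨hDer, -, -, -, -, -, h5⟩ := hD
  simp (disch := decide) only [φ_wedge_φ_of_gt] at h5
  change D (mon {5}) = _ at h5
  have e03_03 : mon {0, 3} ⋏ mon {0, 3} = 0 := mon_wedge_mon_of_not_disjoint (by decide)
  have e03_14 : mon {0, 3} ⋏ mon {1, 4} = -mon {0, 1, 3, 4} := mon_wedge_mon_of_odd (by decide)
  have e14_03 : mon {1, 4} ⋏ mon {0, 3} = -mon {0, 1, 3, 4} := mon_wedge_mon_of_odd (by decide)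
  have e14_14 : mon {1, 4} ⋏ mon {1, 4} = 0 := mon_wedge_mon_of_not_disjoint (by decide)
  have h035 : D (mon {0, 3, 5}) = (conj t + 1) • mon {0, 1, 3, 4} := by
    rw [← mon_wedge_mon_of_even (T := {0, 3}) (U := {5}) (by decide),
      hDer.map_wedge_of_even even_two (mon_mem_Ldeg rfl), h03, zero_wedge, zero_add, h5]
    simp only [wedge_neg, wedge_add, wedge_smul, e03_03, e03_14]
    module
  have h145 : D (mon {1, 4, 5}) = (conj t + I) • mon {0, 1, 3, 4} := by
    rw [← mon_wedge_mon_of_even (T := {1, 4}) (U := {5}) (by decide),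
      hDer.map_wedge_of_even even_two (mon_mem_Ldeg rfl), h14, zero_wedge, zero_add, h5]
    simp only [wedge_neg, wedge_add, wedge_smul, e14_03, e14_14]
    module
  rw [hDb.apply_ω, map_smul, map_add, map_smul, map_smul, h035, h145, sktDefect]
  module

lemma IsDelT.apply_ω_wedge_sub_wedge (hD : IsDelT t D) (hDb : IsDelBarT t Db) :
    D ω ⋏ Db ω - Db ω ⋏ D ω = (1 / 2 * sktDefect t) • mon Finset.univ := by
  have e035_023 : mon {0, 3, 5} ⋏ mon {0, 2, 3} = 0 := mon_wedge_mon_of_not_disjoint (by decide)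
  have e035_124 : mon {0, 3, 5} ⋏ mon {1, 2, 4} = -mon Finset.univ :=
    mon_wedge_mon_of_odd (by decide)
  have e145_023 : mon {1, 4, 5} ⋏ mon {0, 2, 3} = -mon Finset.univ :=
    mon_wedge_mon_of_odd (by decide)
  have e145_124 : mon {1, 4, 5} ⋏ mon {1, 2, 4} = 0 := mon_wedge_mon_of_not_disjoint (by decide)
  have e023_035 : mon {0, 2, 3} ⋏ mon {0, 3, 5} = 0 := mon_wedge_mon_of_not_disjoint (by decide)
  have e023_145 : mon {0, 2, 3} ⋏ mon {1, 4, 5} = mon Finset.univ :=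
    mon_wedge_mon_of_even (by decide)
  have e124_035 : mon {1, 2, 4} ⋏ mon {0, 3, 5} = mon Finset.univ :=
    mon_wedge_mon_of_even (by decide)
  have e124_145 : mon {1, 2, 4} ⋏ mon {1, 4, 5} = 0 := mon_wedge_mon_of_not_disjoint (by decide)
  rw [hD.apply_ω, hDb.apply_ω]
  simp only [smul_wedge, wedge_smul, add_wedge, wedge_add, e035_023, e035_124, e145_023,
    e145_124, e023_035, e023_145, e124_035, e124_145, sktDefect]
  match_scalars
  linear_combination (-(t + conj t) / 2 - t * conj t + I * (conj t - t) / 2) * I_sq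

end CalabiEckmann

/-- for `t = 0`, `∂_0∂̄_0 ω = 0` and `∂_0∂̄_0(ω∧ω) = 0`: the standard
invariant Hermitian metric on the Calabi–Eckmann manifold `S³×S³` is both SKT and
Gauduchon. -/
theorem stmt12 (D Db : Lam →ₗ[ℂ] Lam) (hD : IsDelT 0 D) (hDb : IsDelBarT 0 Db) :
    D (Db ω) = 0 ∧ D (Db (ω ⋏ ω)) = 0 := by
  have hskt : D (Db ω) = 0 := by
    rw [hD.apply_delBar_ω hDb, sktDefect_zero, mul_zero, zero_smul]
  refine ⟨hskt, ?_⟩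
  rw [hD.1.map_map_wedge_self hDb.1 even_two ω_mem_Ldeg hDb.apply_ω_mem_Ldeg, hskt,
    hD.apply_ω_wedge_sub_wedge hDb, sktDefect_zero, zero_wedge, wedge_zero, mul_zero, zero_smul,
    add_zero, add_zero]

end
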